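/- Let T be a set (of traces) and hp : T → H, lp : T → L functions (high and low projections). Assume non-interference: for all t, t' ∈ T there exists s ∈ T with lp(s) = lp(t) and hp(s) = hp(t'). Assume further that there exist t₁, t₂ ∈ T with hp(t₁) ≠ hp(t₂). Then for every t ∈ T there exists t' ∈ T with lp(t') = lp(t) and hp(t') ≠ hp(t); i.e. every trace's high behaviour is opaque with respect to the observation function lp. -/
import Mathlib

/-- Non-interference (with at least two distinct high projections) implies that
every trace's high behaviour is opaque w.r.t. the low observation `lp`. -/
theorem noninterference_implies_opacity {T H L : Type*}
    (hp : T → H) (lp : T → L)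
    (hNI : ∀ t t' : T, ∃ s : T, lp s = lp t ∧ hp s = hp t')
    (hTwo : ∃ t₁ t₂ : T, hp t₁ ≠ hp t₂) :
    ∀ t : T, ∃ t' : T, lp t' = lp t ∧ hp t' ≠ hp t := by
  intro t
  obtain ⟨t₁, t₂, hne⟩ := hTwo
  by_cases h : hp t₁ = hp t
  · obtain ⟨s, hs1, hs2⟩ := hNI t t₂
    exact ⟨s, hs1, by rw [hs2]; intro he; exact hne (h.trans he.symm)⟩
  · obtain ⟨s, hs1, hs2⟩ := hNI t t₁
    exact ⟨s, hs1, by rw [hs2]; exact h⟩
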